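/- arXiv:1509.04650 — 2 statements merged into one kernel-verified Lean document; each statement's English description precedes it below -/
import Mathlib

section
/- In the GLP random graph process, for each vertex j and each integer t_0 ≥ j, the sequence of random variables Z_t := d_t(j)·1_{{T_{j,1} = t_0}} / ∏_{s=1}^{t−1}(1 + c_p/s), for t ≥ t_0, is a martingale with respect to the filtration (F_t). -/
/-!
On the event `{T_{j,1} = t₀} ∈ F_{t₀}` the vertex `j` is present at every time `t ≥ t₀`, so it is
never the incoming vertex of a vertex-step. Given `F_t`, it then gains a half-edge as the target of
a vertex-step with probability `p d_t(j) / 2t`, and as each of the two endpoints of an edge-step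
with probability `(1 - p) d_t(j) / 2t` (sum over the other endpoint, using `∑_v d_t(v) = 2t`).
Hence `E[d_{t+1}(j) 1_{T_{j,1} = t₀} | F_t] = (1 + c_p / t) d_t(j) 1_{T_{j,1} = t₀}`, which after
normalisation is the one-step martingale identity; the tower property gives all `s ≤ t`.
-/

open MeasureTheory ProbabilityTheory Filter Finset
open scoped ENNReal

/-- The two kinds of stochastic operations in the GLP process: a vertex-step attaching the
new vertex to `u`, or an edge-step adding an edge between the (ordered) pair `u`, `v`. -/
inductive GLPStep where
  | vertex (u : ℕ) : GLPStep
  | edge (u v : ℕ) : GLPStep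
  deriving DecidableEq

/-- The GLP (generalized linear preferential) random graph process with parameter `p`:
at each step, with probability `p` a vertex-step is performed and with probability `1 - p`
an edge-step is performed, connections being chosen proportionally to degrees.
`n t` is the number of vertices of `G t`, `d t j` is the degree of the `j`-th vertex in
`G t` (zero if not yet present, loops counting twice), `Ecount t u v` is the number of
edges between `u` and `v` in `G t`, and `step t` is the random operation performed to
obtain `G (t+1)` from `G t`. -/
structure GLPProcess (p : ℝ) where
  Ω : Type
  mΩ : MeasurableSpace Ω
  μ : MeasureTheory.Measure Ω
  isProb : MeasureTheory.IsProbabilityMeasure μ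
  F : MeasureTheory.Filtration ℕ mΩ
  n : ℕ → Ω → ℕ
  d : ℕ → ℕ → Ω → ℕ
  Ecount : ℕ → ℕ → ℕ → Ω → ℕ
  step : ℕ → Ω → GLPStep
  /-- `G 1` consists of one vertex with one loop. -/
  n_one : ∀ ω, n 1 ω = 1
  d_one : ∀ ω j, d 1 j ω = if j = 1 then 2 else 0
  Ecount_one : ∀ ω u v, Ecount 1 u v ω = if u = 1 ∧ v = 1 then 1 else 0
  Ecount_symm : ∀ t u v ω, Ecount t u v ω = Ecount t v u ω
  /-- a vertex-step adds one vertex, an edge-step none. -/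
  n_succ : ∀ t ω, 1 ≤ t → n (t + 1) ω =
    (match step t ω with
      | .vertex _ => n t ω + 1
      | .edge _ _ => n t ω)
  /-- degree update: in a vertex-step the chosen vertex and the incoming vertex (labeled
  `n t ω + 1`) each gain one; in an edge-step each chosen endpoint gains one (so a loop
  adds two to its vertex). -/
  d_succ : ∀ t ω j, 1 ≤ t → d (t + 1) j ω =
    (match step t ω with
      | .vertex u => d t j ω + (if j = u then 1 else 0) + (if j = n t ω + 1 then 1 else 0)
      | .edge u v => d t j ω + (if j = u then 1 else 0) + (if j = v then 1 else 0))
  Ecount_succ : ∀ t ω u v, 1 ≤ t → Ecount (t + 1) u v ω =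
    (match step t ω with
      | .vertex w => Ecount t u v ω +
          (if (u = w ∧ v = n t ω + 1) ∨ (v = w ∧ u = n t ω + 1) then 1 else 0)
      | .edge w z => Ecount t u v ω +
          (if (u = w ∧ v = z) ∨ (u = z ∧ v = w) then 1 else 0))
  adapted_n : ∀ t, Measurable[F t] (n t)
  adapted_d : ∀ t j, Measurable[F t] (d t j)
  adapted_E : ∀ t u v, Measurable[F t] (Ecount t u v)
  step_meas_vertex : ∀ t u, MeasurableSet[F (t + 1)] {ω | step t ω = GLPStep.vertex u}
  step_meas_edge : ∀ t u v, MeasurableSet[F (t + 1)] {ω | step t ω = GLPStep.edge u v}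
  /-- conditional law of a vertex-step given `F t`: the new vertex attaches to `u` with
  probability `p * d t u / (2 t)`. -/
  law_vertex : ∀ t, 1 ≤ t → ∀ u : ℕ, ∀ A : Set Ω, MeasurableSet[F t] A →
    μ (A ∩ {ω | step t ω = GLPStep.vertex u}) =
      ∫⁻ ω in A, ENNReal.ofReal (p * (d t u ω : ℝ) / (2 * t)) ∂μ
  /-- conditional law of an edge-step given `F t`: the ordered pair `(u, v)` is chosen with
  probability `(1 - p) * d t u * d t v / (4 t ^ 2)`. -/
  law_edge : ∀ t, 1 ≤ t → ∀ u v : ℕ, ∀ A : Set Ω, MeasurableSet[F t] A →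
    μ (A ∩ {ω | step t ω = GLPStep.edge u v}) =
      ∫⁻ ω in A, ENNReal.ofReal ((1 - p) * (d t u ω : ℝ) * (d t v ω : ℝ) / (4 * t ^ 2)) ∂μ

/-- `T j`: the random time at which the `j`-th vertex is added to the graph. -/
noncomputable def GLPProcess.T {p : ℝ} (P : GLPProcess p) (j : ℕ) (ω : P.Ω) : ℕ :=
  sInf {t : ℕ | 1 ≤ t ∧ j ≤ P.n t ω}

/-- `d_{t,m}(j)`: the total degree at time `t` of the `j`-th block of `m` consecutive
vertices. -/
def GLPProcess.blockDeg {p : ℝ} (P : GLPProcess p) (m t j : ℕ) (ω : P.Ω) : ℕ :=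
  ∑ i ∈ Finset.Icc ((j - 1) * m + 1) (j * m), P.d t i ω

/-- `T^{(m)}_{j,k}`: the first time the `j`-th block of `m` vertices has total degree at
least `k` (`⊤` if this never happens). -/
noncomputable def GLPProcess.blockTime {p : ℝ} (P : GLPProcess p) (m j k : ℕ) (ω : P.Ω) : ℕ∞ :=
  sInf {x : ℕ∞ | ∃ t : ℕ, x = (t : ℕ∞) ∧ 1 ≤ t ∧ k ≤ P.blockDeg m t j ω}

theorem condExp_ae_eq_of_condExp_succ {Ω : Type*} {m₀ : MeasurableSpace Ω} {μ : Measure Ω}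
    [IsFiniteMeasure μ] {F : Filtration ℕ m₀} {f : ℕ → Ω → ℝ} {t₀ : ℕ}
    (hf : ∀ t, t₀ ≤ t → StronglyMeasurable[F t] (f t))
    (hsucc : ∀ t, t₀ ≤ t → μ[f (t + 1) | F t] =ᵐ[μ] f t) {s t : ℕ} (hs : t₀ ≤ s) (hst : s ≤ t) :
    μ[f t | F s] =ᵐ[μ] f s := by
  induction t, hst using Nat.le_induction with
  | base =>
    exact (condExp_of_stronglyMeasurable (F.le s) (hf s hs)
      (integrable_condExp.congr (hsucc s hs))).eventuallyEq
  | succ t hst ih =>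
    calc μ[f (t + 1) | F s] =ᵐ[μ] μ[μ[f (t + 1) | F t] | F s] :=
          (condExp_condExp_of_le (F.mono hst) (F.le t)).symm
      _ =ᵐ[μ] μ[f t | F s] := condExp_congr_ae (hsucc t (hs.trans hst))
      _ =ᵐ[μ] f s := ih

lemma one_add_ofReal_rates {p : ℝ} (hp₀ : 0 ≤ p) (hp₁ : p ≤ 1) {t : ℝ} (ht : 0 < t) :
    1 + ENNReal.ofReal (p / (2 * t)) + ENNReal.ofReal ((1 - p) / (2 * t))
      + ENNReal.ofReal ((1 - p) / (2 * t)) = ENNReal.ofReal (1 + (1 - p / 2) / t) := by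
  have hq : 0 ≤ (1 - p) / (2 * t) := div_nonneg (by linarith) (by positivity)
  rw [← ENNReal.ofReal_one, ← ENNReal.ofReal_add zero_le_one (by positivity),
    ← ENNReal.ofReal_add (by positivity) hq, ← ENNReal.ofReal_add (by positivity) hq]
  congr 1
  field_simp
  ring

lemma one_add_div_pos_of_le_two {p : ℝ} (hp : p ≤ 2) (t : ℕ) : 0 < 1 + (1 - p / 2) / (t : ℝ) := by
  have : (0 : ℝ) ≤ (1 - p / 2) / t := div_nonneg (by linarith) (Nat.cast_nonneg t)
  linarith

/-- `∏_{s=1}^{t-1} (1 + c_p / s)` with `c_p = 1 - p / 2`, the growth factor of `𝔼 d_t(j)`. -/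
noncomputable def degreeNormalizer (p : ℝ) (t : ℕ) : ℝ :=
  ∏ s ∈ Finset.Icc 1 (t - 1), (1 + (1 - p / 2) / (s : ℝ))

lemma degreeNormalizer_succ (p : ℝ) {t : ℕ} (ht : 1 ≤ t) :
    degreeNormalizer p (t + 1) = degreeNormalizer p t * (1 + (1 - p / 2) / t) := by
  obtain ⟨k, rfl⟩ : ∃ k, t = k + 1 := ⟨t - 1, by omega⟩
  rw [degreeNormalizer, degreeNormalizer, Nat.add_sub_cancel, Nat.add_sub_cancel,
    Finset.prod_Icc_succ_top (by omega)]

namespace GLPProcess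

variable {p : ℝ} (P : GLPProcess p)

attribute [local instance] GLPProcess.mΩ GLPProcess.isProb

lemma exists_d_succ {t : ℕ} (ht : 1 ≤ t) (ω : P.Ω) : ∃ a b : ℕ, ∀ v,
    P.d (t + 1) v ω = P.d t v ω + (if v = a then 1 else 0) + (if v = b then 1 else 0) := by
  cases h : P.step t ω with
  | vertex u => exact ⟨u, P.n t ω + 1, fun v => by rw [P.d_succ t ω v ht, h]⟩
  | edge u w => exact ⟨u, w, fun v => by rw [P.d_succ t ω v ht, h]⟩

lemma d_le {t : ℕ} (ht : 1 ≤ t) (j : ℕ) (ω : P.Ω) : P.d t j ω ≤ 2 * t := by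
  induction t, ht using Nat.le_induction with
  | base => rw [P.d_one]; split <;> omega
  | succ t ht ih =>
    obtain ⟨a, b, h⟩ := P.exists_d_succ ht ω
    rw [h]; split_ifs <;> omega

lemma tsum_d {t : ℕ} (ht : 1 ≤ t) (ω : P.Ω) : ∑' v, (P.d t v ω : ℝ≥0∞) = 2 * t := by
  induction t, ht using Nat.le_induction with
  | base => simp [P.d_one, Nat.cast_ite]
  | succ t ht ih =>
    obtain ⟨a, b, h⟩ := P.exists_d_succ ht ω
    simp only [h, Nat.cast_add, Nat.cast_ite, Nat.cast_one, Nat.cast_zero]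
    rw [ENNReal.tsum_add, ENNReal.tsum_add, ih, tsum_ite_eq, tsum_ite_eq]
    ring

lemma n_le_n_succ {t : ℕ} (ht : 1 ≤ t) (ω : P.Ω) : P.n t ω ≤ P.n (t + 1) ω := by
  rw [P.n_succ t ω ht]; cases P.step t ω <;> simp

lemma n_mono {a b : ℕ} (ha : 1 ≤ a) (hab : a ≤ b) (ω : P.Ω) : P.n a ω ≤ P.n b ω := by
  induction b, hab using Nat.le_induction with
  | base => exact le_rfl
  | succ b hb ih => exact ih.trans (P.n_le_n_succ (ha.trans hb) ω)

lemma T_eq_succ_iff (j k : ℕ) (ω : P.Ω) :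
    P.T j ω = k + 1 ↔ j ≤ P.n (k + 1) ω ∧ ¬(1 ≤ k ∧ j ≤ P.n k ω) := by
  rw [GLPProcess.T, Nat.sInf_upward_closed_eq_succ_iff]
  · simp
  · rintro a b hab ⟨ha, hj⟩
    exact ⟨ha.trans hab, hj.trans (P.n_mono ha hab ω)⟩

lemma measurableSet_T_eq (j : ℕ) {t₀ : ℕ} (ht₀ : 1 ≤ t₀) :
    MeasurableSet[P.F t₀] {ω | P.T j ω = t₀} := by
  obtain ⟨k, rfl⟩ : ∃ k, t₀ = k + 1 := ⟨t₀ - 1, by omega⟩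
  have hprev : MeasurableSet[P.F (k + 1)] {ω | 1 ≤ k ∧ j ≤ P.n k ω} := by
    by_cases hk : 1 ≤ k
    · simp only [hk, true_and]
      exact P.F.mono (Nat.le_succ k) _ (P.adapted_n k measurableSet_Ici)
    · simp only [hk, false_and, Set.ofPred_false, MeasurableSet.empty]
  have hset : {ω | P.T j ω = k + 1} = P.n (k + 1) ⁻¹' Set.Ici j \ {ω | 1 ≤ k ∧ j ≤ P.n k ω} := by
    ext ω; simp [P.T_eq_succ_iff]
  rw [hset]
  exact (P.adapted_n (k + 1) measurableSet_Ici).diff hprev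

lemma le_n_of_T_eq {j t₀ t : ℕ} {ω : P.Ω} (hT : P.T j ω = t₀) (ht₀ : 1 ≤ t₀) (ht : t₀ ≤ t) :
    j ≤ P.n t ω := by
  obtain ⟨k, rfl⟩ : ∃ k, t₀ = k + 1 := ⟨t₀ - 1, by omega⟩
  exact ((P.T_eq_succ_iff j k ω).1 hT).1.trans (P.n_mono ht₀ ht ω)

lemma measurable_d_real (t j : ℕ) : Measurable[P.F t] fun ω => (P.d t j ω : ℝ) :=
  measurable_from_top.comp (P.adapted_d t j)

lemma measurable_d_ennreal (t j : ℕ) : Measurable fun ω => (P.d t j ω : ℝ≥0∞) :=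
  measurable_from_top.comp ((P.adapted_d t j).mono (P.F.le t) le_rfl)

lemma measurableSet_step_vertex (t u : ℕ) : MeasurableSet {ω | P.step t ω = .vertex u} :=
  P.F.le (t + 1) _ (P.step_meas_vertex t u)

lemma measurableSet_step_edge (t u v : ℕ) : MeasurableSet {ω | P.step t ω = .edge u v} :=
  P.F.le (t + 1) _ (P.step_meas_edge t u v)

lemma d_succ_eq_add {t : ℕ} (ht : 1 ≤ t) {j : ℕ} {ω : P.Ω} (hj : j ≤ P.n t ω) :
    (P.d (t + 1) j ω : ℝ≥0∞) = P.d t j ω + {ω | P.step t ω = .vertex j}.indicator 1 ω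
      + ∑' v, {ω | P.step t ω = .edge j v}.indicator 1 ω
      + ∑' u, {ω | P.step t ω = .edge u j}.indicator 1 ω := by
  rw [P.d_succ t ω j ht]
  cases h : P.step t ω with
  | vertex u =>
    have : j ≠ P.n t ω + 1 := by omega
    simp [Set.indicator_apply, h, this, eq_comm]
  | edge u v =>
    rcases eq_or_ne j u with rfl | hju <;> rcases eq_or_ne j v with rfl | hjv <;>
      simp [Set.indicator_apply, *, eq_comm]

lemma lintegral_d_succ {t : ℕ} (ht : 1 ≤ t) {j : ℕ} {B : Set P.Ω} (hB : MeasurableSet B)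
    (hjB : ∀ ω ∈ B, j ≤ P.n t ω) :
    ∫⁻ ω in B, (P.d (t + 1) j ω : ℝ≥0∞) ∂P.μ = ∫⁻ ω in B, (P.d t j ω : ℝ≥0∞) ∂P.μ
      + P.μ (B ∩ {ω | P.step t ω = .vertex j})
      + ∑' v, P.μ (B ∩ {ω | P.step t ω = .edge j v})
      + ∑' u, P.μ (B ∩ {ω | P.step t ω = .edge u j}) := by
  have hind : ∀ {S : Set P.Ω}, MeasurableSet S →
      ∫⁻ ω in B, S.indicator 1 ω ∂P.μ = P.μ (B ∩ S) := fun hS => by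
    rw [lintegral_indicator_one hS, Measure.restrict_apply hS, Set.inter_comm]
  have hmeas : ∀ {S : Set P.Ω}, MeasurableSet S → Measurable (S.indicator (1 : P.Ω → ℝ≥0∞)) :=
    fun hS => measurable_one.indicator hS
  rw [setLIntegral_congr_fun hB fun ω hω => P.d_succ_eq_add ht (hjB ω hω),
    lintegral_add_right _ (Measurable.tsum fun u => hmeas (P.measurableSet_step_edge t u j)),
    lintegral_add_right _ (Measurable.tsum fun v => hmeas (P.measurableSet_step_edge t j v)),
    lintegral_add_right _ (hmeas (P.measurableSet_step_vertex t j)),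
    lintegral_tsum fun v => (hmeas (P.measurableSet_step_edge t j v)).aemeasurable,
    lintegral_tsum fun u => (hmeas (P.measurableSet_step_edge t u j)).aemeasurable,
    hind (P.measurableSet_step_vertex t j)]
  simp only [hind (P.measurableSet_step_edge t _ _)]

lemma measure_inter_step_vertex {t : ℕ} (ht : 1 ≤ t) (hp : 0 ≤ p) {B : Set P.Ω}
    (hB : MeasurableSet[P.F t] B) (u : ℕ) :
    P.μ (B ∩ {ω | P.step t ω = .vertex u})
      = ENNReal.ofReal (p / (2 * t)) * ∫⁻ ω in B, (P.d t u ω : ℝ≥0∞) ∂P.μ := by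
  rw [P.law_vertex t ht u B hB, ← lintegral_const_mul _ (P.measurable_d_ennreal t u)]
  congr with ω
  rw [mul_div_right_comm, ENNReal.ofReal_mul (by positivity), ENNReal.ofReal_natCast]

lemma measure_inter_step_edge {t : ℕ} (ht : 1 ≤ t) (hp : p ≤ 1) {B : Set P.Ω}
    (hB : MeasurableSet[P.F t] B) (u v : ℕ) :
    P.μ (B ∩ {ω | P.step t ω = .edge u v}) = ∫⁻ ω in B,
      ENNReal.ofReal ((1 - p) / (4 * t ^ 2)) * P.d t u ω * P.d t v ω ∂P.μ := by
  have hp' : 0 ≤ (1 - p) / (4 * t ^ 2) := div_nonneg (by linarith) (by positivity)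
  rw [P.law_edge t ht u v B hB]
  congr with ω
  rw [show (1 - p) * (P.d t u ω : ℝ) * P.d t v ω / (4 * t ^ 2)
      = (1 - p) / (4 * t ^ 2) * P.d t u ω * P.d t v ω by ring,
    ENNReal.ofReal_mul (by positivity), ENNReal.ofReal_mul hp', ENNReal.ofReal_natCast,
    ENNReal.ofReal_natCast]

lemma measure_inter_step_edge_comm {t : ℕ} (ht : 1 ≤ t) (hp : p ≤ 1) {B : Set P.Ω}
    (hB : MeasurableSet[P.F t] B) (u v : ℕ) :
    P.μ (B ∩ {ω | P.step t ω = .edge u v}) = P.μ (B ∩ {ω | P.step t ω = .edge v u}) := by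
  simp only [P.measure_inter_step_edge ht hp hB, mul_right_comm _ (P.d t u _ : ℝ≥0∞)]

lemma tsum_measure_inter_step_edge {t : ℕ} (ht : 1 ≤ t) (hp : p ≤ 1) {B : Set P.Ω}
    (hB : MeasurableSet[P.F t] B) (u : ℕ) :
    ∑' v, P.μ (B ∩ {ω | P.step t ω = .edge u v})
      = ENNReal.ofReal ((1 - p) / (2 * t)) * ∫⁻ ω in B, (P.d t u ω : ℝ≥0∞) ∂P.μ := by
  have htR : (0 : ℝ) < t := by exact_mod_cast ht
  have hrate : ENNReal.ofReal ((1 - p) / (4 * t ^ 2)) * (2 * t)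
      = ENNReal.ofReal ((1 - p) / (2 * t)) := by
    rw [show (2 * t : ℝ≥0∞) = ENNReal.ofReal (2 * t) by simp,
      ← ENNReal.ofReal_mul (div_nonneg (by linarith) (by positivity))]
    congr 1
    field_simp
    ring
  simp only [P.measure_inter_step_edge ht hp hB]
  have hd := P.measurable_d_ennreal t
  rw [← lintegral_tsum fun v => by fun_prop, ← lintegral_const_mul _ (hd u)]
  congr with ω
  rw [ENNReal.tsum_mul_left, P.tsum_d ht, mul_right_comm, hrate]

lemma lintegral_d_succ_eq (hp₀ : 0 ≤ p) (hp₁ : p ≤ 1) {t : ℕ} (ht : 1 ≤ t) {j : ℕ}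
    {B : Set P.Ω} (hB : MeasurableSet[P.F t] B) (hjB : ∀ ω ∈ B, j ≤ P.n t ω) :
    ∫⁻ ω in B, (P.d (t + 1) j ω : ℝ≥0∞) ∂P.μ
      = ENNReal.ofReal (1 + (1 - p / 2) / t) * ∫⁻ ω in B, (P.d t j ω : ℝ≥0∞) ∂P.μ := by
  rw [P.lintegral_d_succ ht (P.F.le t _ hB) hjB, P.measure_inter_step_vertex ht hp₀ hB,
    P.tsum_measure_inter_step_edge ht hp₁ hB,
    tsum_congr fun u => P.measure_inter_step_edge_comm ht hp₁ hB u j,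
    P.tsum_measure_inter_step_edge ht hp₁ hB,
    ← one_add_ofReal_rates hp₀ hp₁ (by exact_mod_cast ht : (0 : ℝ) < t)]
  ring

lemma setIntegral_d_succ_eq (hp₀ : 0 ≤ p) (hp₁ : p ≤ 1) {t : ℕ} (ht : 1 ≤ t) {j : ℕ}
    {B : Set P.Ω} (hB : MeasurableSet[P.F t] B) (hjB : ∀ ω ∈ B, j ≤ P.n t ω) :
    ∫ ω in B, (P.d (t + 1) j ω : ℝ) ∂P.μ
      = (1 + (1 - p / 2) / t) * ∫ ω in B, (P.d t j ω : ℝ) ∂P.μ := by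
  have hcast : ∀ s, ∫ ω in B, (P.d s j ω : ℝ) ∂P.μ = (∫⁻ ω in B, (P.d s j ω : ℝ≥0∞) ∂P.μ).toReal :=
    fun s => by
      simpa using integral_toReal (P.measurable_d_ennreal s j).aemeasurable
        (ae_of_all _ fun ω => ENNReal.natCast_lt_top (P.d s j ω))
  rw [hcast, hcast, P.lintegral_d_succ_eq hp₀ hp₁ ht hB hjB, ENNReal.toReal_mul,
    ENNReal.toReal_ofReal (one_add_div_pos_of_le_two (by linarith) t).le]

lemma integrable_d {t : ℕ} (ht : 1 ≤ t) (j : ℕ) : Integrable (fun ω => (P.d t j ω : ℝ)) P.μ :=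
  Integrable.of_bound ((P.measurable_d_real t j).mono (P.F.le t) le_rfl).aestronglyMeasurable
    (2 * t) (ae_of_all _ fun ω => by
      simpa using (by exact_mod_cast P.d_le ht j ω : (P.d t j ω : ℝ) ≤ 2 * t))

noncomputable def scaledDegree (j t₀ t : ℕ) (ω : P.Ω) : ℝ :=
  {ω | P.T j ω = t₀}.indicator (fun ω => (P.d t j ω : ℝ)) ω / degreeNormalizer p t

variable {j t₀ t : ℕ}

lemma stronglyMeasurable_scaledDegree (ht₀ : 1 ≤ t₀) (ht : t₀ ≤ t) :
    StronglyMeasurable[P.F t] (P.scaledDegree j t₀ t) :=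
  (((P.measurable_d_real t j).indicator (P.F.mono ht _ (P.measurableSet_T_eq j ht₀))).div_const
    _).stronglyMeasurable

lemma integrable_scaledDegree (ht₀ : 1 ≤ t₀) (ht : t₀ ≤ t) :
    Integrable (P.scaledDegree j t₀ t) P.μ :=
  ((P.integrable_d (ht₀.trans ht) j).indicator
    (P.F.le t₀ _ (P.measurableSet_T_eq j ht₀))).div_const _

lemma condExp_scaledDegree_succ (hp₀ : 0 ≤ p) (hp₁ : p ≤ 1) (ht₀ : 1 ≤ t₀) (ht : t₀ ≤ t) :
    P.μ[P.scaledDegree j t₀ (t + 1) | P.F t] =ᵐ[P.μ] P.scaledDegree j t₀ t := by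
  have hE : MeasurableSet[P.F t] {ω | P.T j ω = t₀} := P.F.mono ht _ (P.measurableSet_T_eq j ht₀)
  refine (ae_eq_condExp_of_forall_setIntegral_eq (P.F.le t)
    (P.integrable_scaledDegree ht₀ (ht.trans t.le_succ))
    (fun A _ _ => (P.integrable_scaledDegree ht₀ ht).integrableOn) (fun A hA _ => ?_)
    (P.stronglyMeasurable_scaledDegree ht₀ ht).aestronglyMeasurable).symm
  simp only [scaledDegree, integral_div, setIntegral_indicator (P.F.le t _ hE)]
  rw [P.setIntegral_d_succ_eq hp₀ hp₁ (ht₀.trans ht) (hA.inter hE)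
      fun ω hω => P.le_n_of_T_eq hω.2 ht₀ ht,
    degreeNormalizer_succ p (ht₀.trans ht), mul_comm (degreeNormalizer p t),
    mul_div_mul_left _ _ (one_add_div_pos_of_le_two (by linarith) t).ne']

end GLPProcess

/-- For each vertex `j` and `t₀ ≥ j`, the process
`Z t = d_t(j) · 1_{T_{j,1} = t₀} / ∏_{s=1}^{t-1} (1 + c_p / s)`, `t ≥ t₀`, is a martingale
with respect to the filtration `F`: it is adapted and `E[Z t | F s] = Z s` a.s. for
`t₀ ≤ s ≤ t`. -/
theorem glp_degree_martingale (p : ℝ) (hp : p ∈ Set.Ioo (0 : ℝ) 1)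
    (P : GLPProcess p) (j t₀ : ℕ) (hj : 1 ≤ j) (ht₀ : j ≤ t₀)
    (Z : ℕ → P.Ω → ℝ)
    (hZ : Z = fun t ω =>
      ((P.d t j ω : ℝ) * (if P.T j ω = t₀ then 1 else 0)) /
        ∏ s ∈ Finset.Icc 1 (t - 1), (1 + (1 - p / 2) / (s : ℝ))) :
    (∀ t, t₀ ≤ t → StronglyMeasurable[P.F t] (Z t)) ∧
    (∀ s t, t₀ ≤ s → s ≤ t →
      MeasureTheory.condExp (P.F s) P.μ (Z t) =ᵐ[P.μ] Z s) := by
  have h₁ : 1 ≤ t₀ := hj.trans ht₀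
  have hZ' : Z = P.scaledDegree j t₀ := by
    subst hZ
    ext t ω
    simp [GLPProcess.scaledDegree, degreeNormalizer, Set.indicator_apply]
  subst hZ'
  have := P.isProb
  have hmeas : ∀ t, t₀ ≤ t → StronglyMeasurable[P.F t] (P.scaledDegree j t₀ t) :=
    fun t ht => P.stronglyMeasurable_scaledDegree h₁ ht
  exact ⟨hmeas, fun s t hs hst => condExp_ae_eq_of_condExp_succ hmeas
    (fun t ht => P.condExp_scaledDegree_succ hp.1.le hp.2.le h₁ ht) hs hst⟩
end

section
/- In the GLP random graph process, for every integer t ≥ 1, every real D > 0 and every pair of distinct vertices u, v present in G_t, the probability of the event that u and v are not joined by any edge in G_{2t} and that d_t(u) ≥ D and d_t(v) ≥ D is at most exp( −(1−p)·D² / (8t) ). -/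
open MeasureTheory ProbabilityTheory Filter Finset
open scoped ENNReal

/-!
Degrees never decrease, so as long as `u` and `v` are non-adjacent, every step `s` with
`t ≤ s < 2t` is an edge-step joining them, as `(u, v)` or as `(v, u)`, with conditional
probability at least `2 (1 - p) D² / (4 s²) ≥ (1 - p) D² / (8 t²)`. Staying non-adjacent
for all `t` steps therefore has probability at most
`(1 - (1 - p) D² / (8 t²)) ^ t ≤ exp (-(1 - p) D² / (8 t))`.
-/

lemma ENNReal.one_sub_ofReal_pow_le_ofReal_exp {x : ℝ} (hx : 0 ≤ x) (n : ℕ) :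
    (1 - ENNReal.ofReal x) ^ n ≤ ENNReal.ofReal (Real.exp (-(n * x))) := by
  have h : 1 - ENNReal.ofReal x ≤ ENNReal.ofReal (Real.exp (-x)) := by
    rw [← ENNReal.ofReal_one, ← ENNReal.ofReal_sub _ hx]
    exact ENNReal.ofReal_le_ofReal (by linarith [Real.add_one_le_exp (-x)])
  calc (1 - ENNReal.ofReal x) ^ n ≤ ENNReal.ofReal (Real.exp (-x)) ^ n := by gcongr
    _ = ENNReal.ofReal (Real.exp (-(n * x))) := by
      rw [← ENNReal.ofReal_pow (Real.exp_pos _).le, ← Real.exp_nat_mul, mul_neg]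

namespace GLPProcess

variable {p : ℝ} (P : GLPProcess p)

lemma d_le_succ {t : ℕ} (ht : 1 ≤ t) (j : ℕ) (ω : P.Ω) : P.d t j ω ≤ P.d (t + 1) j ω := by
  rw [P.d_succ t ω j ht]
  cases P.step t ω <;> exact Nat.le_add_right_of_le (Nat.le_add_right _ _)

lemma d_mono {t s : ℕ} (ht : 1 ≤ t) (hts : t ≤ s) (j : ℕ) (ω : P.Ω) :
    P.d t j ω ≤ P.d s j ω := by
  induction s, hts using Nat.le_induction with
  | base => exact le_rfl
  | succ s hs ih => exact ih.trans (P.d_le_succ (ht.trans hs) j ω)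

lemma Ecount_le_succ {t : ℕ} (ht : 1 ≤ t) (u v : ℕ) (ω : P.Ω) :
    P.Ecount t u v ω ≤ P.Ecount (t + 1) u v ω := by
  rw [P.Ecount_succ t ω u v ht]
  cases P.step t ω <;> exact Nat.le_add_right _ _

lemma mul_measure_le_measure_inter_step_edge {s : ℕ} (hs : 1 ≤ s) (u v : ℕ) {A : Set P.Ω}
    (hA : MeasurableSet[P.F s] A) {a : ℝ≥0∞}
    (ha : ∀ ω ∈ A, a ≤ ENNReal.ofReal ((1 - p) * P.d s u ω * P.d s v ω / (4 * s ^ 2))) :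
    a * P.μ A ≤ P.μ (A ∩ {ω | P.step s ω = .edge u v}) := by
  rw [P.law_edge s hs u v A hA, ← setLIntegral_const]
  exact setLIntegral_mono' (P.F.le s _ hA) ha

lemma measure_inter_Ecount_succ_eq_zero_le {s : ℕ} (hs : 1 ≤ s) {u v : ℕ} (huv : u ≠ v)
    {A : Set P.Ω} (hA : MeasurableSet[P.F s] A) {a : ℝ≥0∞}
    (ha : ∀ ω ∈ A, a ≤ ENNReal.ofReal ((1 - p) * P.d s u ω * P.d s v ω / (4 * s ^ 2))) :
    P.μ (A ∩ {ω | P.Ecount (s + 1) u v ω = 0}) ≤ (1 - 2 * a) * P.μ A := by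
  set X := A ∩ {ω | P.Ecount (s + 1) u v ω = 0}
  set Euv := A ∩ {ω | P.step s ω = .edge u v}
  set Evu := A ∩ {ω | P.step s ω = .edge v u}
  have hAm : MeasurableSet[P.mΩ] A := P.F.le s _ hA
  have hEuv : a * P.μ A ≤ P.μ Euv := P.mul_measure_le_measure_inter_step_edge hs u v hA ha
  have hEvu : a * P.μ A ≤ P.μ Evu := P.mul_measure_le_measure_inter_step_edge hs v u hA
    fun ω hω => by simpa only [mul_right_comm _ (P.d s u ω : ℝ)] using ha ω hω
  have joins (ω : P.Ω) (h : P.step s ω = .edge u v ∨ P.step s ω = .edge v u) :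
      P.Ecount (s + 1) u v ω ≠ 0 := by
    rcases h with h | h <;> simp [P.Ecount_succ s ω u v hs, h]
  have hdisjX : Disjoint X (Euv ∪ Evu) := Set.disjoint_left.2 fun ω hX hE =>
    joins ω (hE.imp And.right And.right) hX.2
  have hdisjE : Disjoint Euv Evu := Set.disjoint_left.2 fun ω h₁ h₂ =>
    huv (GLPStep.edge.inj (h₁.2.symm.trans h₂.2)).1
  have hsum : P.μ X + 2 * a * P.μ A ≤ P.μ A :=
    calc P.μ X + 2 * a * P.μ A ≤ P.μ X + (P.μ Euv + P.μ Evu) := by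
          rw [two_mul, add_mul]; gcongr
      _ = P.μ (X ∪ (Euv ∪ Evu)) := by
          rw [measure_union hdisjX ((hAm.inter (P.F.le _ _ (P.step_meas_edge s u v))).union
            (hAm.inter (P.F.le _ _ (P.step_meas_edge s v u)))),
            measure_union hdisjE (hAm.inter (P.F.le _ _ (P.step_meas_edge s v u)))]
      _ ≤ P.μ A := measure_mono (Set.union_subset Set.inter_subset_left
          (Set.union_subset Set.inter_subset_left Set.inter_subset_left))
  have := P.isProb
  rw [ENNReal.sub_mul fun _ _ => measure_ne_top _ _, one_mul]
  exact ENNReal.le_sub_of_add_le_right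
    (ne_top_of_le_ne_top (measure_ne_top _ _) (le_add_self.trans hsum)) hsum

lemma measure_inter_Ecount_eq_zero_le (hp : p ≤ 1) {t : ℕ} (ht : 1 ≤ t) {u v : ℕ}
    (huv : u ≠ v) {D : ℝ} (hD : 0 ≤ D) {B : Set P.Ω} (hB : MeasurableSet[P.F t] B)
    (hBd : ∀ ω ∈ B, D ≤ P.d t u ω ∧ D ≤ P.d t v ω) {k : ℕ} (hk : k ≤ t) :
    P.μ (B ∩ {ω | P.Ecount (t + k) u v ω = 0}) ≤
      (1 - 2 * ENNReal.ofReal ((1 - p) * D ^ 2 / (16 * t ^ 2))) ^ k * P.μ B := by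
  set r := 1 - 2 * ENNReal.ofReal ((1 - p) * D ^ 2 / (16 * t ^ 2))
  induction k with
  | zero => rw [pow_zero, one_mul]; exact measure_mono Set.inter_subset_left
  | succ k ih =>
    set s := t + k
    have hs : 1 ≤ s := ht.trans (Nat.le_add_right t k)
    have hA : MeasurableSet[P.F s] (B ∩ {ω | P.Ecount s u v ω = 0}) :=
      (P.F.mono (Nat.le_add_right t k) _ hB).inter (P.adapted_E s u v (measurableSet_singleton 0))
    have hsucc : B ∩ {ω | P.Ecount (s + 1) u v ω = 0} =
        B ∩ {ω | P.Ecount s u v ω = 0} ∩ {ω | P.Ecount (s + 1) u v ω = 0} := by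
      ext ω
      have := P.Ecount_le_succ hs u v ω
      simp only [Set.mem_inter_iff, Set.mem_ofPred_eq, and_assoc]
      exact ⟨fun ⟨hB, h⟩ => ⟨hB, by omega, h⟩, fun ⟨hB, _, h⟩ => ⟨hB, h⟩⟩
    have hrate (ω : P.Ω) (hω : ω ∈ B) :
        (1 - p) * D ^ 2 / (16 * t ^ 2) ≤ (1 - p) * P.d s u ω * P.d s v ω / (4 * s ^ 2) := by
      have hu : D ≤ P.d s u ω := (hBd ω hω).1.trans (mod_cast P.d_mono ht (by omega) u ω)
      have hv : D ≤ P.d s v ω := (hBd ω hω).2.trans (mod_cast P.d_mono ht (by omega) v ω)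
      have hs2 : (s : ℝ) ≤ 2 * t := by norm_cast; omega
      have hs1 : (1 : ℝ) ≤ s := mod_cast hs
      rw [mul_assoc, sq D]
      exact div_le_div₀ (by positivity) (by gcongr) (by positivity) (by nlinarith)
    calc P.μ (B ∩ {ω | P.Ecount (s + 1) u v ω = 0})
        = P.μ (B ∩ {ω | P.Ecount s u v ω = 0} ∩ {ω | P.Ecount (s + 1) u v ω = 0}) := by
          rw [hsucc]
      _ ≤ r * P.μ (B ∩ {ω | P.Ecount s u v ω = 0}) :=
          P.measure_inter_Ecount_succ_eq_zero_le hs huv hA fun ω hω =>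
            ENNReal.ofReal_le_ofReal (hrate ω hω.1)
      _ ≤ r * (r ^ k * P.μ B) := by gcongr; exact ih (by omega)
      _ = r ^ (k + 1) * P.μ B := by ring

end GLPProcess

theorem glp_disconnection_probability_bound_general (p : ℝ) (hp : p ∈ Set.Ioo (0 : ℝ) 1)
    (P : GLPProcess p) (t : ℕ) (ht : 1 ≤ t) (D : ℝ) (hD : 0 < D)
    (u v : ℕ) (huv : u ≠ v) :
    P.μ {ω | u ≤ P.n t ω ∧ v ≤ P.n t ω ∧ P.Ecount (2 * t) u v ω = 0 ∧
        D ≤ (P.d t u ω : ℝ) ∧ D ≤ (P.d t v ω : ℝ)} ≤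
      ENNReal.ofReal (Real.exp (-(1 - p) * D ^ 2 / (8 * t))) := by
  have := P.isProb
  set B := {ω | u ≤ P.n t ω ∧ v ≤ P.n t ω ∧ D ≤ (P.d t u ω : ℝ) ∧ D ≤ (P.d t v ω : ℝ)}
  have hB : MeasurableSet[P.F t] B := by
    simp only [B, Set.ofPred_and]
    exact (measurableSet_le measurable_const (P.adapted_n t)).inter
      ((measurableSet_le measurable_const (P.adapted_n t)).inter
        ((measurableSet_le measurable_const (measurable_from_nat.comp (P.adapted_d t u))).inter
          (measurableSet_le measurable_const (measurable_from_nat.comp (P.adapted_d t v)))))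
  have hevent : {ω | u ≤ P.n t ω ∧ v ≤ P.n t ω ∧ P.Ecount (2 * t) u v ω = 0 ∧
      D ≤ (P.d t u ω : ℝ) ∧ D ≤ (P.d t v ω : ℝ)} = B ∩ {ω | P.Ecount (t + t) u v ω = 0} := by
    ext ω; simp only [B, Set.mem_inter_iff, Set.mem_ofPred_eq, two_mul]; tauto
  calc _ = P.μ (B ∩ {ω | P.Ecount (t + t) u v ω = 0}) := by rw [hevent]
    _ ≤ (1 - 2 * ENNReal.ofReal ((1 - p) * D ^ 2 / (16 * t ^ 2))) ^ t * P.μ B :=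
        P.measure_inter_Ecount_eq_zero_le hp.2.le ht huv hD.le hB
          (fun ω hω => ⟨hω.2.2.1, hω.2.2.2⟩) le_rfl
    _ ≤ (1 - ENNReal.ofReal (2 * ((1 - p) * D ^ 2 / (16 * t ^ 2)))) ^ t := by
        rw [ENNReal.ofReal_mul zero_le_two, ENNReal.ofReal_ofNat]
        exact mul_le_of_le_one_right' prob_le_one
    _ ≤ _ := ENNReal.one_sub_ofReal_pow_le_ofReal_exp
        (by have := sub_nonneg.2 hp.2.le; positivity) t
    _ = _ := by
        have : (t : ℝ) ≠ 0 := by positivity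
        congr 2; field_simp; ring

/-- For every `t ≥ 1`, `D > 0` and distinct vertices `u, v` present in `G t`, the
probability that `u` and `v` are not joined by any edge in `G (2t)` while both have degree
at least `D` at time `t` is at most `exp(-(1-p) D² / (8t))`. -/
theorem glp_disconnection_probability_bound (p : ℝ) (hp : p ∈ Set.Ioo (0 : ℝ) 1)
    (P : GLPProcess p) (t : ℕ) (ht : 1 ≤ t) (D : ℝ) (hD : 0 < D)
    (u v : ℕ) (hu : 1 ≤ u) (hv : 1 ≤ v) (huv : u ≠ v) :
    P.μ {ω | u ≤ P.n t ω ∧ v ≤ P.n t ω ∧ P.Ecount (2 * t) u v ω = 0 ∧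
        D ≤ (P.d t u ω : ℝ) ∧ D ≤ (P.d t v ω : ℝ)} ≤
      ENNReal.ofReal (Real.exp (-(1 - p) * D ^ 2 / (8 * t))) :=
  glp_disconnection_probability_bound_general p hp P t ht D hD u v huv
end
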